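/- arXiv:2403.16670 — 2 statements merged into one kernel-verified Lean document; each statement's English description precedes it below -/
import Mathlib

section
/- For all nonnegative integers m and n, the probabilistic bivariate r-Bell polynomials satisfy the recurrence φ_{m+n,r}^Y(x,y) = Σ_{i=0}^{n} Σ_{k=0}^{m} C(n,i) · φ_{i,r}^Y(x−k, y) · ((x)_k y^k / k!) · Σ_{j=k}^{m} Σ_{l_1+⋯+l_k=j, l_i≥1} C(m,j) · (j!/(l_1!⋯l_k!)) · r^{m−j} · E[S_k^{n−i} · ∏_{i'=1}^{k} Y_{i'}^{l_{i'}}], where the innermost sum is over all k-tuples (l_1,…,l_k) of positive integers with l_1+⋯+l_k = j. -/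
/-!
Let `g(t) = E[e^{tY}]`. By independence `E[e^{t(S_j + r)}] = e^{rt} g(t)^j`, so the exponential
generating function of `n ↦ k! {n+r brace k+r}_{r,Y}` is `e^{rt} (g(t) - 1)^k`. Replace `t` by
`t + s` and split `g(t+s) - 1 = (g(t+s) - g(t)) + (g(t) - 1)`:
`e^{r(t+s)} (g(t+s) - 1)^K = ∑_k C(K,k) e^{rt} (g(t) - 1)^{K-k} · e^{rs} (g(t+s) - g(t))^k`.
Again by independence `(g(t+s) - g(t))^k = E[e^{t S_k} ∏_{i<k} (e^{s Y_i} - 1)]`, and expanding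
`e^{rs} ∏ (e^{s Y_i} - 1)` produces exactly the sums over positive tuples of the recurrence.
Comparing coefficients of `t^n s^m` expresses `{m+n+r brace K+r}` as a convolution of Stirling
numbers with these weights, and `(x)_{k+a} = (x)_k (x-k)_a` turns it into the recurrence. All
series are formal, in `ℝ⟦t⟧⟦s⟧`.
-/

open MeasureTheory ProbabilityTheory Finset

noncomputable section

variable {Ω : Type*} [MeasureSpace Ω]

/-- The falling factorial `(x)_k = x (x-1) ⋯ (x-k+1)`. -/
def fallFac (x : ℝ) (k : ℕ) : ℝ := ∏ i ∈ Finset.range k, (x - (i : ℝ))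

/-- Partial sums `S_k = Y_1 + ⋯ + Y_k` (with `S_0 = 0`). -/
def S (Y : ℕ → Ω → ℝ) (k : ℕ) (ω : Ω) : ℝ := ∑ i ∈ Finset.range k, Y i ω

/-- The probabilistic r-Stirling numbers of the second kind associated with `Y`:
`{n+r brace k+r}_{r,Y} = (1/k!) ∑_{j=0}^{k} C(k,j) (−1)^{k−j} E[(S_j + r)^n]`. -/
def probRStirling (Y : ℕ → Ω → ℝ) (r n k : ℕ) : ℝ :=
  ((k.factorial : ℝ))⁻¹ *
    ∑ j ∈ Finset.range (k + 1), (k.choose j : ℝ) * (-1) ^ (k - j) *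
      ∫ ω, (S Y j ω + (r : ℝ)) ^ n

/-- The probabilistic bivariate r-Bell polynomials associated with `Y`:
`φ_{n,r}^Y(x,y) = ∑_{k=0}^{n} {n+r brace k+r}_{r,Y} (x)_k y^k`. -/
def phiRBiv (Y : ℕ → Ω → ℝ) (r n : ℕ) (x y : ℝ) : ℝ :=
  ∑ k ∈ Finset.range (n + 1), probRStirling Y r n k * fallFac x k * y ^ k

/-- k-tuples of positive integers summing to `j`. -/
def posTuples (k j : ℕ) : Finset (Fin k → ℕ) :=
  (Finset.Nat.antidiagonalTuple k j).filter fun l => ∀ i, 0 < l i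

theorem sum_range_sum_antidiagonal_eq_sum_range_sum_range {M : Type*} [AddCommMonoid M]
    {m n : ℕ} (f : ℕ → ℕ → M) (hf : ∀ a b, f a b ≠ 0 → a ≤ m ∧ b ≤ n) :
    ∑ K ∈ range (m + n + 1), ∑ x ∈ antidiagonal K, f x.1 x.2 =
      ∑ a ∈ range (m + 1), ∑ b ∈ range (n + 1), f a b := by
  rw [sum_sigma', ← sum_product']
  refine sum_bij_ne_zero (fun x _ _ => x.2) ?_ ?_ ?_ ?_
  · rintro ⟨K, a, b⟩ - hne
    have := hf a b hne
    simp only [mem_product, mem_range]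
    omega
  · rintro ⟨K, x⟩ h _ ⟨K', x'⟩ h' _ (rfl : x = x')
    simp only [mem_sigma, HasAntidiagonal.mem_antidiagonal] at h h'
    rw [← h.2, ← h'.2]
  · rintro ⟨a, b⟩ - hne
    refine ⟨⟨a + b, a, b⟩, ?_, hne, rfl⟩
    have := hf a b hne
    simp only [mem_sigma, mem_range, HasAntidiagonal.mem_antidiagonal, and_true]
    omega
  · intros
    rfl

theorem fallFac_add (x : ℝ) (k a : ℕ) :
    fallFac x (k + a) = fallFac x k * fallFac (x - k) a := by
  simp only [fallFac, prod_range_add, Nat.cast_add, sub_sub]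

theorem posTuples_eq_empty_of_lt {k j : ℕ} (h : j < k) : posTuples k j = ∅ := by
  refine filter_false_of_mem fun l hl hpos => h.not_ge ?_
  rw [Nat.mem_antidiagonalTuple] at hl
  simpa [← hl] using card_nsmul_le_sum univ l 1 fun i _ => hpos i

theorem posTuples_zero (q : ℕ) : posTuples 0 q = if q = 0 then {0} else ∅ := by
  ext l
  split_ifs with hq
  · simp [posTuples, hq, Subsingleton.elim l 0]
  · simp [posTuples, Nat.mem_antidiagonalTuple, Ne.symm hq]

theorem multinomial_snoc {k : ℕ} (l : Fin k → ℕ) (e : ℕ) :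
    Nat.multinomial univ (Fin.snoc l e : Fin (k + 1) → ℕ) =
      (e + ∑ i, l i).choose e * Nat.multinomial univ l := by
  rw [Fin.univ_castSuccEmb, Nat.multinomial_cons]
  simp [Nat.multinomial, sum_map, prod_map]

theorem sum_posTuples_succ {M : Type*} [AddCommMonoid M] (k q : ℕ)
    (f : (Fin (k + 1) → ℕ) → M) :
    ∑ l ∈ posTuples (k + 1) q, f l =
      ∑ x ∈ antidiagonal q with 0 < x.2, ∑ l ∈ posTuples k x.1, f (Fin.snoc l x.2) := by
  rw [sum_sigma']
  refine sum_nbij' (fun l => ⟨(q - l (Fin.last k), l (Fin.last k)), Fin.init l⟩)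
    (fun x => Fin.snoc x.2 x.1.2) ?_ ?_ ?_ ?_ ?_
  · intro l hl
    simp only [posTuples, mem_filter, Nat.mem_antidiagonalTuple, Fin.sum_univ_castSucc] at hl
    obtain ⟨hsum, hpos⟩ := hl
    simp only [mem_sigma, mem_filter, HasAntidiagonal.mem_antidiagonal, posTuples,
      Nat.mem_antidiagonalTuple, Fin.init]
    have := hpos (Fin.last k)
    exact ⟨⟨by omega, this⟩, by omega, fun i => hpos _⟩
  · rintro ⟨⟨b, e⟩, l⟩ h
    simp only [mem_sigma, mem_filter, HasAntidiagonal.mem_antidiagonal, posTuples,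
      Nat.mem_antidiagonalTuple] at h
    obtain ⟨⟨hbe, he⟩, hsum, hpos⟩ := h
    simp only [posTuples, mem_filter, Nat.mem_antidiagonalTuple, Fin.sum_univ_castSucc,
      Fin.snoc_castSucc, Fin.snoc_last]
    exact ⟨by omega, Fin.lastCases (by simpa using he) fun i => by simpa using hpos i⟩
  · intro l _
    simp
  · rintro ⟨⟨b, e⟩, l⟩ h
    simp only [mem_sigma, mem_filter, HasAntidiagonal.mem_antidiagonal] at h
    simp only [Fin.snoc_last, Fin.init_snoc, Sigma.mk.injEq, Prod.mk.injEq, heq_eq_eq, and_true]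
    omega
  · intro l _
    simp

theorem sum_antidiagonal_ite_fst_eq_zero {M : Type*} [AddCommMonoid M] (n : ℕ)
    (f : ℕ × ℕ → M) : ∑ x ∈ antidiagonal n, (if x.1 = 0 then f x else 0) = f (0, n) := by
  refine (sum_eq_single_of_mem (0, n) (by simp) fun x hx hne => if_neg fun h => hne ?_).trans
    (if_pos rfl)
  rw [HasAntidiagonal.mem_antidiagonal] at hx
  exact Prod.ext h (by simp; omega)

theorem sum_antidiagonal_ite_snd_eq_zero {M : Type*} [AddCommMonoid M] (n : ℕ)
    (f : ℕ × ℕ → M) : ∑ x ∈ antidiagonal n, (if x.2 = 0 then f x else 0) = f (n, 0) := by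
  refine (sum_eq_single_of_mem (n, 0) (by simp) fun x hx hne => if_neg fun h => hne ?_).trans
    (if_pos rfl)
  rw [HasAntidiagonal.mem_antidiagonal] at hx
  exact Prod.ext (by simp; omega) h

theorem add_pow_add_eq_sum {R : Type*} [CommSemiring R] (a b : R) (p q : ℕ) :
    (a + b) ^ (p + q) = ∑ x ∈ antidiagonal p, ∑ y ∈ antidiagonal q,
      p.choose x.1 * q.choose y.1 * (a ^ (x.1 + y.1) * b ^ (x.2 + y.2)) := by
  rw [pow_add, (Commute.all _ _).add_pow', (Commute.all _ _).add_pow', sum_mul_sum]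
  refine sum_congr rfl fun x _ => sum_congr rfl fun y _ => ?_
  simp only [nsmul_eq_mul, pow_add]
  ring

theorem sum_mul_fallFac_mul_pow_eq_sum_sum {m n : ℕ} (s : ℕ → ℝ) (T : ℕ → ℕ → ℝ)
    (hs : ∀ K, s K = ∑ z ∈ antidiagonal K, T z.1 z.2)
    (hT : ∀ k a, T k a ≠ 0 → k ≤ m ∧ a ≤ n) (x y : ℝ) :
    ∑ K ∈ range (m + n + 1), s K * fallFac x K * y ^ K =
      ∑ k ∈ range (m + 1), ∑ a ∈ range (n + 1),
        T k a * (fallFac x k * y ^ k) * (fallFac (x - k) a * y ^ a) := by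
  have hK (K : ℕ) : s K * fallFac x K * y ^ K =
      ∑ z ∈ antidiagonal K, T z.1 z.2 * (fallFac x (z.1 + z.2) * y ^ (z.1 + z.2)) := by
    rw [hs, sum_mul, sum_mul]
    refine sum_congr rfl fun z hz => ?_
    rw [HasAntidiagonal.mem_antidiagonal.1 hz]
    ring
  simp_rw [hK]
  rw [sum_range_sum_antidiagonal_eq_sum_range_sum_range
    (fun k a => T k a * (fallFac x (k + a) * y ^ (k + a)))
    fun k a h => hT k a (left_ne_zero_of_mul h)]
  simp_rw [fallFac_add, pow_add]
  refine sum_congr rfl fun k _ => sum_congr rfl fun a _ => by ring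

section PartialSums

variable {α : Type*} (Y : ℕ → α → ℝ)

theorem S_zero (ω : α) : S Y 0 ω = 0 := sum_range_zero _

theorem S_succ (k : ℕ) (ω : α) : S Y (k + 1) ω = S Y k ω + Y k ω :=
  sum_range_succ _ _

theorem S_eq_sum_fin (k : ℕ) (ω : α) : S Y k ω = ∑ i : Fin k, Y i ω :=
  (Fin.sum_univ_eq_sum_range _ _).symm

theorem S_succ_add_pow_mul_prod_snoc (c : ℝ) {k : ℕ} (p : ℕ) (l : Fin k → ℕ) (e : ℕ) (ω : α) :
    (S Y (k + 1) ω + c) ^ p * ∏ i : Fin (k + 1), Y i ω ^ (Fin.snoc l e : Fin (k + 1) → ℕ) i =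
      ∑ x ∈ antidiagonal p, p.choose x.1 *
        (((S Y k ω + c) ^ x.1 * ∏ i : Fin k, Y i ω ^ l i) * Y k ω ^ (x.2 + e)) := by
  rw [S_succ, add_right_comm, (Commute.all _ _).add_pow', Fin.prod_univ_castSucc, sum_mul]
  refine sum_congr rfl fun x _ => ?_
  simp only [Fin.snoc_castSucc, Fin.snoc_last, Fin.val_castSucc, Fin.val_last, nsmul_eq_mul,
    pow_add]
  ring

end PartialSums

/-- The bivariate exponential generating function `∑ a p q t^p s^q / (p! q!)`; `t` is the outer and
`s` the inner variable. -/
def egf₂ : (ℕ → ℕ → ℝ) →ₗ[ℝ] PowerSeries (PowerSeries ℝ) where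
  toFun a := PowerSeries.mk fun p => PowerSeries.mk fun q => a p q / (p.factorial * q.factorial)
  map_add' a b := by ext; simp [add_div]
  map_smul' c a := by ext; simp [mul_div_assoc]

theorem coeff_coeff_egf₂ (a : ℕ → ℕ → ℝ) (p q : ℕ) :
    PowerSeries.coeff q (PowerSeries.coeff p (egf₂ a)) = a p q / (p.factorial * q.factorial) := by
  simp [egf₂]

theorem egf₂_injective : Function.Injective egf₂ := by
  intro a b h
  ext p q
  have := congrArg (fun Z => PowerSeries.coeff q (PowerSeries.coeff p Z)) h
  simpa [coeff_coeff_egf₂, div_left_inj' (by positivity : (p.factorial * q.factorial : ℝ) ≠ 0)]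
    using this

def binomConv₂ (u v : ℕ → ℕ → ℝ) (p q : ℕ) : ℝ :=
  ∑ x ∈ antidiagonal p, ∑ y ∈ antidiagonal q,
    p.choose x.1 * q.choose y.1 * u x.1 y.1 * v x.2 y.2

theorem egf₂_mul (u v : ℕ → ℕ → ℝ) : egf₂ u * egf₂ v = egf₂ (binomConv₂ u v) := by
  ext p q
  rw [coeff_coeff_egf₂, PowerSeries.coeff_mul, map_sum, binomConv₂, sum_div]
  refine sum_congr rfl fun x hx => ?_
  rw [PowerSeries.coeff_mul, sum_div]
  refine sum_congr rfl fun y hy => ?_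
  rw [HasAntidiagonal.mem_antidiagonal] at hx hy
  subst hx hy
  rw [coeff_coeff_egf₂, coeff_coeff_egf₂, Nat.cast_add_choose, Nat.cast_add_choose]
  field_simp

def evalInnerZero : PowerSeries (PowerSeries ℝ) →+* PowerSeries (PowerSeries ℝ) :=
  (PowerSeries.map PowerSeries.C).comp (PowerSeries.map PowerSeries.constantCoeff)

theorem evalInnerZero_egf₂ (a : ℕ → ℕ → ℝ) :
    evalInnerZero (egf₂ a) = egf₂ fun p q => if q = 0 then a p 0 else 0 := by
  ext p q
  rcases q with _ | q <;>
    simp [evalInnerZero, coeff_coeff_egf₂, PowerSeries.coeff_C,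
      ← PowerSeries.coeff_zero_eq_constantCoeff_apply]

theorem egf₂_pow_add_eq_evalInnerZero_mul (c : ℝ) :
    egf₂ (fun p q => c ^ (p + q)) =
      evalInnerZero (egf₂ fun p q => c ^ (p + q)) *
        egf₂ (fun p q => if p = 0 then c ^ q else 0) := by
  rw [evalInnerZero_egf₂, egf₂_mul]
  congr
  ext p q
  simp only [binomConv₂, ite_mul, mul_ite, mul_zero, zero_mul]
  simp [sum_antidiagonal_ite_fst_eq_zero, sum_antidiagonal_ite_snd_eq_zero, pow_add]

/-- `p! q!` times the coefficient of `t^p s^q` in `E[e^{t S_k} ∏_{i<k} (e^{s Y_i} - 1)]`. -/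
def posMixedMoment (Y : ℕ → Ω → ℝ) (k p q : ℕ) : ℝ :=
  ∑ l ∈ posTuples k q, (Nat.multinomial univ l : ℝ) * ∫ ω, S Y k ω ^ p * ∏ i : Fin k, Y i ω ^ l i

theorem posMixedMoment_of_lt (Y : ℕ → Ω → ℝ) {k q : ℕ} (p : ℕ) (h : q < k) :
    posMixedMoment Y k p q = 0 := by
  simp [posMixedMoment, posTuples_eq_empty_of_lt h]

/-- `E[e^{(t+s) Y₀}]`. -/
def momentEGF₂ (Y₀ : Ω → ℝ) : PowerSeries (PowerSeries ℝ) :=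
  egf₂ fun p q => moment Y₀ (p + q) volume

theorem momentEGF₂_sub_evalInnerZero (Y₀ : Ω → ℝ) :
    momentEGF₂ Y₀ - evalInnerZero (momentEGF₂ Y₀) =
      egf₂ fun p q => if q = 0 then 0 else moment Y₀ (p + q) volume := by
  rw [momentEGF₂, evalInnerZero_egf₂, ← map_sub]
  congr
  ext p q
  split_ifs with hq <;> simp [hq]

/-- `E[S_k^p P]`, where `P` collects the terms of the multinomial expansion of
`(r + Y_0 + ⋯ + Y_{k-1})^m` in which every `Y_i` occurs. -/
def mixedWeight (Y : ℕ → Ω → ℝ) (r k p m : ℕ) : ℝ :=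
  ∑ j ∈ Icc k m, ∑ l ∈ posTuples k j,
    (m.choose j : ℝ) * (Nat.multinomial univ l : ℝ) * (r : ℝ) ^ (m - j) *
      ∫ ω, (S Y k ω) ^ p * ∏ i' : Fin k, (Y i' ω) ^ (l i')

theorem mixedWeight_eq_sum_range (Y : ℕ → Ω → ℝ) (r k p m : ℕ) :
    mixedWeight Y r k p m =
      ∑ j ∈ range (m + 1), m.choose j * posMixedMoment Y k p j * (r : ℝ) ^ (m - j) := by
  rw [mixedWeight]
  calc _ = ∑ j ∈ Icc k m, m.choose j * posMixedMoment Y k p j * (r : ℝ) ^ (m - j) := by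
        refine sum_congr rfl fun j _ => ?_
        simp only [posMixedMoment, mul_sum, sum_mul]
        exact sum_congr rfl fun l _ => by ring
    _ = _ := by
        refine sum_subset (fun j hj => by simp at hj ⊢; omega) fun j hj hj' => ?_
        simp only [mem_range, mem_Icc, not_and, not_le] at hj hj'
        rw [posMixedMoment_of_lt Y p (by omega), mul_zero, zero_mul]

theorem mixedWeight_of_lt (Y : ℕ → Ω → ℝ) (r : ℕ) {k m : ℕ} (p : ℕ) (h : m < k) :
    mixedWeight Y r k p m = 0 := by
  simp [mixedWeight, Icc_eq_empty_of_lt h]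

structure IsIIDWithMoments (Y : ℕ → Ω → ℝ) (Y₀ : Ω → ℝ) : Prop where
  measurable : ∀ i, Measurable (Y i)
  indep : iIndepFun Y volume
  identDistrib : ∀ i, IdentDistrib (Y i) Y₀ volume volume
  integrable_pow : ∀ m : ℕ, Integrable fun ω => Y₀ ω ^ m

namespace IsIIDWithMoments

variable {Y : ℕ → Ω → ℝ} {Y₀ : Ω → ℝ} (hY : IsIIDWithMoments Y Y₀)
include hY

theorem identDistrib_pow (i e : ℕ) :
    IdentDistrib (fun ω => Y i ω ^ e) (fun ω => Y₀ ω ^ e) volume volume :=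
  (hY.identDistrib i).comp (measurable_id.pow_const e)

theorem integrable_pow_apply (i e : ℕ) : Integrable fun ω => Y i ω ^ e :=
  (hY.identDistrib_pow i e).integrable_iff.2 (hY.integrable_pow e)

theorem indepFun_comp_pow {k : ℕ} {g : (Fin k → ℝ) → ℝ} (hg : Measurable g) (e : ℕ) :
    IndepFun (fun ω => g fun i => Y i ω) (fun ω => Y k ω ^ e) volume :=
  (hY.indep.indepFun_finset (range k) {k} (by simp) hY.measurable).comp
    (φ := fun v : range k → ℝ => g fun i => v ⟨i, mem_range.2 i.2⟩)
    (ψ := fun v : ({k} : Finset ℕ) → ℝ => v ⟨k, mem_singleton_self k⟩ ^ e)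
    (by fun_prop) (by fun_prop)

theorem indepFun_S_add_pow_mul_prod (c : ℝ) {k : ℕ} (a : ℕ) (l : Fin k → ℕ) (e : ℕ) :
    IndepFun (fun ω => (S Y k ω + c) ^ a * ∏ i : Fin k, Y i ω ^ l i) (fun ω => Y k ω ^ e)
      volume := by
  simp_rw [S_eq_sum_fin]
  exact hY.indepFun_comp_pow (g := fun v => (∑ i, v i + c) ^ a * ∏ i, v i ^ l i) (by fun_prop) e

theorem integrable_S_add_pow_mul_prod (c : ℝ) (k p : ℕ) (l : Fin k → ℕ) :
    Integrable fun ω => (S Y k ω + c) ^ p * ∏ i : Fin k, Y i ω ^ l i := by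
  have := hY.indep.isProbabilityMeasure
  induction k generalizing p with
  | zero => simp [S_zero]
  | succ k ih =>
    rw [← Fin.snoc_init_self l]
    simp_rw [S_succ_add_pow_mul_prod_snoc]
    exact integrable_finsetSum _ fun x _ => Integrable.const_mul
      ((hY.indepFun_S_add_pow_mul_prod c x.1 _ _).integrable_mul (ih _ _)
        (hY.integrable_pow_apply k _)) _

theorem integrable_S_add_pow_mul_prod_mul_pow (c : ℝ) {k : ℕ} (a : ℕ) (l : Fin k → ℕ) (e : ℕ) :
    Integrable fun ω => ((S Y k ω + c) ^ a * ∏ i : Fin k, Y i ω ^ l i) * Y k ω ^ e :=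
  (hY.indepFun_S_add_pow_mul_prod c a l e).integrable_mul
    (hY.integrable_S_add_pow_mul_prod c k a l) (hY.integrable_pow_apply k e)

theorem integral_S_add_pow_mul_prod_mul_pow (c : ℝ) {k : ℕ} (a : ℕ) (l : Fin k → ℕ) (e : ℕ) :
    ∫ ω, ((S Y k ω + c) ^ a * ∏ i : Fin k, Y i ω ^ l i) * Y k ω ^ e =
      (∫ ω, (S Y k ω + c) ^ a * ∏ i : Fin k, Y i ω ^ l i) * moment Y₀ e volume := by
  rw [(hY.indepFun_S_add_pow_mul_prod c a l e).integral_fun_mul_eq_mul_integral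
    (hY.integrable_S_add_pow_mul_prod c k a l).1 (hY.integrable_pow_apply k e).1,
    (hY.identDistrib_pow k e).integral_eq]
  rfl

theorem integral_S_add_pow_mul_prod_snoc (c : ℝ) {k : ℕ} (p : ℕ) (l : Fin k → ℕ) (e : ℕ) :
    ∫ ω, (S Y (k + 1) ω + c) ^ p * ∏ i : Fin (k + 1), Y i ω ^ (Fin.snoc l e : Fin (k + 1) → ℕ) i =
      ∑ x ∈ antidiagonal p, p.choose x.1 *
        ((∫ ω, (S Y k ω + c) ^ x.1 * ∏ i : Fin k, Y i ω ^ l i) * moment Y₀ (x.2 + e) volume) := by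
  simp_rw [S_succ_add_pow_mul_prod_snoc]
  rw [integral_finsetSum _ fun x _ =>
    (hY.integrable_S_add_pow_mul_prod_mul_pow c x.1 l _).const_mul _]
  simp_rw [integral_const_mul, hY.integral_S_add_pow_mul_prod_mul_pow]

theorem integral_S_succ_add_pow_add (c : ℝ) (k p q : ℕ) :
    ∫ ω, (S Y (k + 1) ω + c) ^ (p + q) =
      binomConv₂ (fun a b => ∫ ω, (S Y k ω + c) ^ (a + b))
        (fun a b => moment Y₀ (a + b) volume) p q := by
  have hInt (a e : ℕ) : Integrable fun ω => (S Y k ω + c) ^ a * Y k ω ^ e := by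
    simpa using hY.integrable_S_add_pow_mul_prod_mul_pow c a (0 : Fin k → ℕ) e
  have hMul (a e : ℕ) :
      ∫ ω, (S Y k ω + c) ^ a * Y k ω ^ e = (∫ ω, (S Y k ω + c) ^ a) * moment Y₀ e volume := by
    simpa using hY.integral_S_add_pow_mul_prod_mul_pow c a (0 : Fin k → ℕ) e
  simp_rw [S_succ, add_right_comm _ _ c, add_pow_add_eq_sum (S Y k _ + c) (Y k _)]
  rw [integral_finsetSum _ fun x _ => integrable_finsetSum _ fun y _ => (hInt _ _).const_mul _]
  refine sum_congr rfl fun x _ => ?_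
  rw [integral_finsetSum _ fun y _ => (hInt _ _).const_mul _]
  simp_rw [integral_const_mul, hMul, mul_assoc]

theorem posMixedMoment_succ (k p q : ℕ) :
    posMixedMoment Y (k + 1) p q =
      binomConv₂ (posMixedMoment Y k)
        (fun a b => if b = 0 then 0 else moment Y₀ (a + b) volume) p q := by
  have hSnoc (l : Fin k → ℕ) (e : ℕ) := hY.integral_S_add_pow_mul_prod_snoc 0 p l e
  simp only [add_zero] at hSnoc
  rw [posMixedMoment, sum_posTuples_succ, binomConv₂, sum_comm, sum_filter]
  refine sum_congr rfl fun y hy => ?_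
  rw [HasAntidiagonal.mem_antidiagonal] at hy
  rcases Nat.eq_zero_or_pos y.2 with hy2 | hy2
  · simp [hy2]
  have hMultinomial {l : Fin k → ℕ} (hl : l ∈ posTuples k y.1) :
      Nat.multinomial univ (Fin.snoc l y.2 : Fin (k + 1) → ℕ) =
        q.choose y.1 * Nat.multinomial univ l := by
    rw [posTuples, mem_filter, Nat.mem_antidiagonalTuple] at hl
    rw [multinomial_snoc, hl.1, Nat.choose_symm_add, add_comm, hy]
  simp only [hy2, if_true, hy2.ne', if_false, posMixedMoment, mul_sum, sum_mul]
  rw [sum_comm]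
  refine sum_congr rfl fun l hl => ?_
  rw [hSnoc, hMultinomial hl, mul_sum]
  refine sum_congr rfl fun x _ => ?_
  push_cast
  ring

theorem egf₂_integral_S_add_pow (c : ℝ) (j : ℕ) :
    egf₂ (fun p q => ∫ ω, (S Y j ω + c) ^ (p + q)) =
      egf₂ (fun p q => c ^ (p + q)) * momentEGF₂ Y₀ ^ j := by
  have := hY.indep.isProbabilityMeasure
  induction j with
  | zero => simp [S_zero]
  | succ j ih =>
    rw [pow_succ, ← mul_assoc, ← ih, momentEGF₂, egf₂_mul]
    congr
    ext p q
    exact hY.integral_S_succ_add_pow_add c j p q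

theorem egf₂_factorial_mul_probRStirling (r K : ℕ) :
    egf₂ (fun p q => K.factorial * probRStirling Y r (p + q) K) =
      egf₂ (fun p q => (r : ℝ) ^ (p + q)) * (momentEGF₂ Y₀ - 1) ^ K := by
  have hSum : (fun p q => K.factorial * probRStirling Y r (p + q) K) =
      ∑ j ∈ range (K + 1), ((-1) ^ (K - j) * K.choose j : ℝ) •
        fun p q => ∫ ω, (S Y j ω + r) ^ (p + q) := by
    ext p q
    simp only [probRStirling, Finset.sum_apply, Pi.smul_apply, smul_eq_mul]
    rw [← mul_assoc, mul_inv_cancel₀ (by positivity), one_mul]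
    exact sum_congr rfl fun j _ => by ring
  rw [hSum, map_sum, sub_eq_add_neg, add_pow, mul_sum]
  refine sum_congr rfl fun j _ => ?_
  rw [map_smul, hY.egf₂_integral_S_add_pow, Algebra.smul_def]
  simp only [map_mul, map_pow, map_neg, map_one, map_natCast]
  ring

theorem egf₂_posMixedMoment (k : ℕ) :
    egf₂ (posMixedMoment Y k) = (momentEGF₂ Y₀ - evalInnerZero (momentEGF₂ Y₀)) ^ k := by
  have := hY.indep.isProbabilityMeasure
  induction k with
  | zero =>
    ext p q
    rw [coeff_coeff_egf₂, pow_zero, PowerSeries.coeff_one]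
    rcases p with _ | p <;> rcases q with _ | q <;>
      simp [posMixedMoment, posTuples_zero, S_zero]
  | succ k ih =>
    rw [pow_succ, ← ih, momentEGF₂_sub_evalInnerZero, egf₂_mul]
    congr
    ext p q
    exact hY.posMixedMoment_succ k p q

theorem egf₂_mixedWeight (r k : ℕ) :
    egf₂ (mixedWeight Y r k) = (momentEGF₂ Y₀ - evalInnerZero (momentEGF₂ Y₀)) ^ k *
      egf₂ (fun p q => if p = 0 then (r : ℝ) ^ q else 0) := by
  rw [← hY.egf₂_posMixedMoment, egf₂_mul]
  congr
  ext p m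
  simp only [binomConv₂, mul_ite, mul_zero]
  rw [sum_comm]
  simp only [sum_antidiagonal_ite_snd_eq_zero]
  rw [mixedWeight_eq_sum_range, Nat.sum_antidiagonal_eq_sum_range_succ
    fun j i => (p.choose p : ℝ) * m.choose j * posMixedMoment Y k p j * (r : ℝ) ^ i]
  simp

theorem probRStirling_of_lt (r : ℕ) {N K : ℕ} (h : N < K) : probRStirling Y r N K = 0 := by
  have := hY.indep.isProbabilityMeasure
  have hEGF := congrArg evalInnerZero (hY.egf₂_factorial_mul_probRStirling r K)
  rw [evalInnerZero_egf₂, map_mul, map_pow, map_sub, map_one] at hEGF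
  have hX : PowerSeries.X ∣ evalInnerZero (momentEGF₂ Y₀) - 1 := by
    rw [PowerSeries.X_dvd_iff, map_sub, map_one, sub_eq_zero, momentEGF₂, evalInnerZero_egf₂]
    ext q
    rw [← PowerSeries.coeff_zero_eq_constantCoeff_apply, coeff_coeff_egf₂, PowerSeries.coeff_one]
    rcases q with _ | q <;> simp [moment]
  have hCoeff := PowerSeries.X_pow_dvd_iff.1
    (hEGF ▸ dvd_mul_of_dvd_right (pow_dvd_pow_of_dvd hX K) _) N h
  simpa [coeff_coeff_egf₂, Nat.factorial_ne_zero] using congrArg (PowerSeries.coeff 0) hCoeff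

theorem factorial_mul_probRStirling_add (r K n m : ℕ) :
    K.factorial * probRStirling Y r (n + m) K =
      ∑ z ∈ antidiagonal K, K.choose z.1 * ∑ x ∈ antidiagonal n,
        n.choose x.1 * (z.2.factorial * probRStirling Y r x.1 z.2) * mixedWeight Y r z.1 x.2 m := by
  let u (a p q : ℕ) : ℝ := if q = 0 then a.factorial * probRStirling Y r p a else 0
  have hu (a : ℕ) : egf₂ (u a) = evalInnerZero (egf₂ fun p q => (r : ℝ) ^ (p + q)) *
      (evalInnerZero (momentEGF₂ Y₀) - 1) ^ a := by
    rw [← map_one evalInnerZero, ← map_sub, ← map_pow, ← map_mul,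
      ← hY.egf₂_factorial_mul_probRStirling, evalInnerZero_egf₂]
    simp [u]
  have hEGF : egf₂ (fun p q => K.factorial * probRStirling Y r (p + q) K) =
      egf₂ fun p q => ∑ z ∈ antidiagonal K,
        K.choose z.1 * binomConv₂ (u z.2) (mixedWeight Y r z.1) p q := by
    have hSplit : momentEGF₂ Y₀ - 1 = (momentEGF₂ Y₀ - evalInnerZero (momentEGF₂ Y₀)) +
        (evalInnerZero (momentEGF₂ Y₀) - 1) := by ring
    have hFun : (fun p q => ∑ z ∈ antidiagonal K,
        K.choose z.1 * binomConv₂ (u z.2) (mixedWeight Y r z.1) p q) =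
        ∑ z ∈ antidiagonal K, (K.choose z.1 : ℝ) • binomConv₂ (u z.2) (mixedWeight Y r z.1) := by
      ext
      simp [Finset.sum_apply]
    rw [hY.egf₂_factorial_mul_probRStirling, egf₂_pow_add_eq_evalInnerZero_mul, hSplit,
      (Commute.all _ _).add_pow', mul_sum, hFun, map_sum]
    refine sum_congr rfl fun z _ => ?_
    rw [map_smul, ← egf₂_mul, hu, hY.egf₂_mixedWeight, nsmul_eq_mul, Algebra.smul_def,
      map_natCast]
    ring
  have := congrFun (congrFun (egf₂_injective hEGF) n) m
  simp only [this, binomConv₂, u, ite_mul, mul_ite, mul_zero, zero_mul,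
    sum_antidiagonal_ite_fst_eq_zero, Nat.choose_zero_right, Nat.cast_one, mul_one]

theorem probRStirling_add_eq_sum (r K m n : ℕ) :
    probRStirling Y r (m + n) K = ∑ z ∈ antidiagonal K, ∑ i ∈ range (n + 1),
      n.choose i * probRStirling Y r i z.2 * mixedWeight Y r z.1 (n - i) m / z.1.factorial := by
  rw [← mul_right_inj' (by positivity : (K.factorial : ℝ) ≠ 0), add_comm,
    hY.factorial_mul_probRStirling_add, mul_sum]
  refine sum_congr rfl fun z hz => ?_
  rw [HasAntidiagonal.mem_antidiagonal] at hz
  subst hz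
  rw [Nat.sum_antidiagonal_eq_sum_range_succ
    (fun i j => (n.choose i : ℝ) * (z.2.factorial * probRStirling Y r i z.2) *
      mixedWeight Y r z.1 j m),
    mul_sum, mul_sum]
  refine sum_congr rfl fun i _ => ?_
  rw [Nat.cast_add_choose]
  field_simp

theorem phiRBiv_eq_sum_range (r : ℕ) {N L : ℕ} (h : N ≤ L) (x y : ℝ) :
    phiRBiv Y r N x y = ∑ a ∈ range (L + 1), probRStirling Y r N a * fallFac x a * y ^ a := by
  refine sum_subset (range_subset_range.2 (by omega)) fun a ha ha' => ?_
  simp only [mem_range, not_lt] at ha ha'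
  rw [hY.probRStirling_of_lt r (by omega), zero_mul, zero_mul]

end IsIIDWithMoments

theorem probBivRBell_recurrence_general
    (Y : ℕ → Ω → ℝ) (Y₀ : Ω → ℝ)
    (hMeas : ∀ i, Measurable (Y i))
    (hIndep : iIndepFun Y volume)
    (hId : ∀ i, IdentDistrib (Y i) Y₀ volume volume)
    (hInt : ∀ m : ℕ, Integrable fun ω => (Y₀ ω) ^ m)
    (r : ℕ)
    (m n : ℕ) (x y : ℝ) :
    phiRBiv Y r (m + n) x y =
      ∑ i ∈ Finset.range (n + 1), ∑ k ∈ Finset.range (m + 1),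
        (n.choose i : ℝ) * phiRBiv Y r i (x - (k : ℝ)) y *
          (fallFac x k * y ^ k / (k.factorial : ℝ)) *
          ∑ j ∈ Finset.Icc k m, ∑ l ∈ posTuples k j,
            (m.choose j : ℝ) * (Nat.multinomial Finset.univ l : ℝ) * (r : ℝ) ^ (m - j) *
              ∫ ω, (S Y k ω) ^ (n - i) * ∏ i' : Fin k, (Y i' ω) ^ (l i') := by
  have hY : IsIIDWithMoments Y Y₀ := ⟨hMeas, hIndep, hId, hInt⟩
  let T (k a : ℕ) : ℝ := ∑ i ∈ range (n + 1),
    n.choose i * probRStirling Y r i a * mixedWeight Y r k (n - i) m / k.factorial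
  have hT (k a : ℕ) (h : T k a ≠ 0) : k ≤ m ∧ a ≤ n := by
    by_contra! hka
    refine h (sum_eq_zero fun i hi => ?_)
    by_cases hk : m < k
    · rw [mixedWeight_of_lt Y r _ hk, mul_zero, zero_div]
    · rw [hY.probRStirling_of_lt r (by simp at hi; omega), mul_zero, zero_mul, zero_div]
  rw [phiRBiv, sum_mul_fallFac_mul_pow_eq_sum_sum _ T (hY.probRStirling_add_eq_sum r · m n) hT]
  conv_rhs => rw [sum_comm]
  refine sum_congr rfl fun k _ => ?_
  simp only [T, sum_mul]
  rw [sum_comm]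
  refine sum_congr rfl fun i hi => ?_
  rw [← mixedWeight, hY.phiRBiv_eq_sum_range r (L := n) (by simpa [Nat.lt_succ_iff] using hi),
    mul_sum, sum_mul, sum_mul]
  refine sum_congr rfl fun a _ => ?_
  ring

theorem probBivRBell_recurrence
    [IsProbabilityMeasure (volume : Measure Ω)]
    (Y : ℕ → Ω → ℝ) (Y₀ : Ω → ℝ)
    (hMeas : ∀ i, Measurable (Y i))
    (hIndep : iIndepFun Y volume)
    (hId : ∀ i, IdentDistrib (Y i) Y₀ volume volume)
    (hInt : ∀ m : ℕ, Integrable fun ω => (Y₀ ω) ^ m)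
    (r : ℕ) (hr : 0 < r)
    (m n : ℕ) (x y : ℝ) :
    phiRBiv Y r (m + n) x y =
      ∑ i ∈ Finset.range (n + 1), ∑ k ∈ Finset.range (m + 1),
        (n.choose i : ℝ) * phiRBiv Y r i (x - (k : ℝ)) y *
          (fallFac x k * y ^ k / (k.factorial : ℝ)) *
          ∑ j ∈ Finset.Icc k m, ∑ l ∈ posTuples k j,
            (m.choose j : ℝ) * (Nat.multinomial Finset.univ l : ℝ) * (r : ℝ) ^ (m - j) *
              ∫ ω, (S Y k ω) ^ (n - i) * ∏ i' : Fin k, (Y i' ω) ^ (l i') :=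
  probBivRBell_recurrence_general Y Y₀ hMeas hIndep hId hInt r m n x y

end
end

section
/- Fix a positive integer r. For every nonnegative integer k, the following identity of formal power series over ℝ holds: (1/k!) · (G − 1)^k · exp(rt) = Σ_{n≥0} {n+r brace k+r}_{r,Y} · t^n / n!, where G = Σ_{n≥0} E[Y^n] t^n / n! is the formal moment series of Y and exp(rt) = Σ_{n≥0} r^n t^n / n!. Equivalently, for all n ≥ 0, n! times the coefficient of t^n in (1/k!)·(G − 1)^k·exp(rt) equals {n+r brace k+r}_{r,Y} (which vanishes for n < k). -/
open MeasureTheory ProbabilityTheory Finset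

noncomputable section

variable {Ω : Type*} [MeasureSpace Ω]

/-- The formal moment series `G = ∑_{n≥0} E[Y₀^n] t^n / n!` of `Y₀`. -/
def momentSeries (Y₀ : Ω → ℝ) : PowerSeries ℝ :=
  PowerSeries.mk fun n => (∫ ω, (Y₀ ω) ^ n) / (n.factorial : ℝ)

/-- The formal exponential series `exp(rt) = ∑_{n≥0} r^n t^n / n!`. -/
def expSeries (r : ℕ) : PowerSeries ℝ :=
  PowerSeries.mk fun n => (r : ℝ) ^ n / (n.factorial : ℝ)

/-! The moment series `momentSeries X = ∑ E[X^n] t^n / n!` is multiplicative on independent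
random variables: expanding `(X + Z)^n` binomially and using `E[X^a Z^b] = E[X^a] E[Z^b]` gives
exactly the binomial convolution that multiplies exponential generating functions. Hence the
moment series of `S_j + r` is `G^j exp(rt)`, and expanding `(G - 1)^k` by the binomial theorem
turns the left-hand side into the alternating sum that defines the r-Stirling numbers. -/

open PowerSeries

theorem mk_div_factorial_mul_mk_div_factorial {K : Type*} [Field K] [CharZero K] (a b : ℕ → K) :
    (mk fun n => a n / n.factorial) * (mk fun n => b n / n.factorial) =
      mk fun n => (∑ p ∈ antidiagonal n, (n.choose p.1 : K) * a p.1 * b p.2) / n.factorial := by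
  ext n
  simp only [coeff_mul, coeff_mk, sum_div]
  refine sum_congr rfl fun ⟨i, j⟩ hij => ?_
  obtain rfl : i + j = n := mem_antidiagonal.mp hij
  have h : ((i + j).choose i * i.factorial * j.factorial : K) = (i + j).factorial := by
    have := Nat.choose_mul_factorial_mul_factorial (Nat.le_add_right i j)
    rw [Nat.add_sub_cancel_left] at this
    exact_mod_cast this
  have hc : ((i + j).choose i : K) ≠ 0 :=
    Nat.cast_ne_zero.mpr (Nat.choose_pos (Nat.le_add_right i j)).ne'
  rw [← h]
  field_simp

theorem add_pow_eq_sum_antidiagonal {R : Type*} [CommSemiring R] (x z : R) (n : ℕ) :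
    (x + z) ^ n = ∑ p ∈ antidiagonal n, (n.choose p.1 : R) * (x ^ p.1 * z ^ p.2) := by
  simp only [(Commute.all x z).add_pow', nsmul_eq_mul]

section Moments

variable {X Z : Ω → ℝ}

theorem ProbabilityTheory.IndepFun.pow (hXZ : IndepFun X Z) (a b : ℕ) :
    IndepFun (fun ω => X ω ^ a) (fun ω => Z ω ^ b) :=
  hXZ.comp (measurable_id.pow_const a) (measurable_id.pow_const b)

theorem ProbabilityTheory.IndepFun.integrable_add_pow (hXZ : IndepFun X Z)
    (hX : ∀ m : ℕ, Integrable fun ω => X ω ^ m) (hZ : ∀ m : ℕ, Integrable fun ω => Z ω ^ m)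
    (n : ℕ) : Integrable fun ω => (X ω + Z ω) ^ n := by
  simp_rw [add_pow_eq_sum_antidiagonal]
  exact integrable_finsetSum _ fun p _ =>
    ((hXZ.pow p.1 p.2).integrable_mul (hX p.1) (hZ p.2)).const_mul _

theorem ProbabilityTheory.IndepFun.integral_add_pow (hXZ : IndepFun X Z)
    (hX : ∀ m : ℕ, Integrable fun ω => X ω ^ m) (hZ : ∀ m : ℕ, Integrable fun ω => Z ω ^ m)
    (n : ℕ) :
    ∫ ω, (X ω + Z ω) ^ n =
      ∑ p ∈ antidiagonal n, (n.choose p.1 : ℝ) * (∫ ω, X ω ^ p.1) * ∫ ω, Z ω ^ p.2 := by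
  simp_rw [add_pow_eq_sum_antidiagonal]
  rw [integral_finsetSum _ fun p _ =>
    ((hXZ.pow p.1 p.2).integrable_mul (hX p.1) (hZ p.2)).const_mul _]
  refine sum_congr rfl fun p _ => ?_
  rw [integral_const_mul, (hXZ.pow p.1 p.2).integral_fun_mul_eq_mul_integral
    (hX p.1).aestronglyMeasurable (hZ p.2).aestronglyMeasurable, mul_assoc]

theorem ProbabilityTheory.IndepFun.momentSeries_add (hXZ : IndepFun X Z)
    (hX : ∀ m : ℕ, Integrable fun ω => X ω ^ m) (hZ : ∀ m : ℕ, Integrable fun ω => Z ω ^ m) :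
    momentSeries (fun ω => X ω + Z ω) = momentSeries X * momentSeries Z := by
  simp only [momentSeries, mk_div_factorial_mul_mk_div_factorial, hXZ.integral_add_pow hX hZ]

theorem ProbabilityTheory.IdentDistrib.momentSeries_eq
    (h : IdentDistrib X Z volume volume) : momentSeries X = momentSeries Z := by
  ext n
  simp only [momentSeries, coeff_mk]
  congr 1
  exact (h.comp (measurable_id.pow_const n)).integral_eq

theorem ProbabilityTheory.IdentDistrib.integrable_pow (h : IdentDistrib X Z volume volume)
    (hZ : ∀ m : ℕ, Integrable fun ω => Z ω ^ m) (m : ℕ) : Integrable fun ω => X ω ^ m :=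
  (h.comp (measurable_id.pow_const m)).integrable_iff.mpr (hZ m)

theorem momentSeries_const [IsProbabilityMeasure (volume : Measure Ω)] (c : ℝ) :
    momentSeries (fun _ : Ω => c) = mk fun n => c ^ n / n.factorial := by
  ext n
  simp [momentSeries]

theorem momentSeries_natCast [IsProbabilityMeasure (volume : Measure Ω)] (r : ℕ) :
    momentSeries (fun _ : Ω => (r : ℝ)) = expSeries r :=
  momentSeries_const _

end Moments

section Sums

variable {ι : Type*} {Y : ι → Ω → ℝ}

theorem ProbabilityTheory.iIndepFun.indepFun_sum_of_notMem (hIndep : iIndepFun Y volume)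
    (hMeas : ∀ i, Measurable (Y i)) {s : Finset ι} {i : ι} (hi : i ∉ s) :
    IndepFun (Y i) (fun ω => ∑ j ∈ s, Y j ω) := by
  simpa only [← Finset.sum_apply] using (hIndep.indepFun_finsetSum_of_notMem hMeas hi).symm

variable [IsProbabilityMeasure (volume : Measure Ω)] {Y₀ : Ω → ℝ}

theorem integrable_sum_pow (hMeas : ∀ i, Measurable (Y i)) (hIndep : iIndepFun Y volume)
    (hId : ∀ i, IdentDistrib (Y i) Y₀ volume volume)
    (hInt : ∀ m : ℕ, Integrable fun ω => Y₀ ω ^ m) (s : Finset ι) (m : ℕ) :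
    Integrable fun ω => (∑ i ∈ s, Y i ω) ^ m := by
  classical
  induction s using Finset.induction_on generalizing m with
  | empty => simp
  | insert i s hi ih =>
    simp only [sum_insert hi]
    exact (hIndep.indepFun_sum_of_notMem hMeas hi).integrable_add_pow
      ((hId i).integrable_pow hInt) ih m

theorem momentSeries_sum (hMeas : ∀ i, Measurable (Y i)) (hIndep : iIndepFun Y volume)
    (hId : ∀ i, IdentDistrib (Y i) Y₀ volume volume)
    (hInt : ∀ m : ℕ, Integrable fun ω => Y₀ ω ^ m) (s : Finset ι) :
    momentSeries (fun ω => ∑ i ∈ s, Y i ω) = momentSeries Y₀ ^ #s := by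
  classical
  induction s using Finset.induction_on with
  | empty =>
    simp only [sum_empty, momentSeries_const, card_empty, pow_zero]
    ext (_ | n) <;> simp [coeff_one]
  | insert i s hi ih =>
    simp only [sum_insert hi, card_insert_of_notMem hi]
    rw [(hIndep.indepFun_sum_of_notMem hMeas hi).momentSeries_add
      ((hId i).integrable_pow hInt) (integrable_sum_pow hMeas hIndep hId hInt s),
      ih, (hId i).momentSeries_eq, pow_succ']

end Sums

theorem probRStirling_generatingFunction_general
    [IsProbabilityMeasure (volume : Measure Ω)]
    (Y : ℕ → Ω → ℝ) (Y₀ : Ω → ℝ)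
    (hMeas : ∀ i, Measurable (Y i))
    (hIndep : iIndepFun Y volume)
    (hId : ∀ i, IdentDistrib (Y i) Y₀ volume volume)
    (hInt : ∀ m : ℕ, Integrable fun ω => (Y₀ ω) ^ m)
    (r : ℕ) (k : ℕ) :
    ((k.factorial : ℝ))⁻¹ • ((momentSeries Y₀ - 1) ^ k * expSeries r) =
      PowerSeries.mk fun n => probRStirling Y r n k / (n.factorial : ℝ) := by
  have hS (j : ℕ) : momentSeries (S Y j) = momentSeries Y₀ ^ j :=
    (momentSeries_sum hMeas hIndep hId hInt (range j)).trans (by rw [card_range])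
  have hshift (j : ℕ) :
      momentSeries (fun ω => S Y j ω + r) = momentSeries Y₀ ^ j * expSeries r := by
    rw [(indepFun_const_right (S Y j) (r : ℝ)).momentSeries_add
      (integrable_sum_pow hMeas hIndep hId hInt _) (fun m => integrable_const _),
      momentSeries_natCast, hS]
  have hbinom : (momentSeries Y₀ - 1) ^ k * expSeries r =
      ∑ j ∈ range (k + 1), ((k.choose j : ℝ) * (-1) ^ (k - j)) •
        momentSeries (fun ω => S Y j ω + r) := by
    rw [sub_eq_add_neg, add_pow, sum_mul]
    refine sum_congr rfl fun j _ => ?_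
    rw [hshift, smul_eq_C_mul, map_mul, map_natCast, map_pow, map_neg, map_one]
    ring
  rw [hbinom]
  ext n
  simp only [coeff_smul, map_sum, coeff_mk, momentSeries, probRStirling, smul_eq_mul,
    sum_div, mul_sum]
  exact sum_congr rfl fun j _ => by ring

theorem probRStirling_generatingFunction
    [IsProbabilityMeasure (volume : Measure Ω)]
    (Y : ℕ → Ω → ℝ) (Y₀ : Ω → ℝ)
    (hMeas : ∀ i, Measurable (Y i))
    (hIndep : iIndepFun Y volume)
    (hId : ∀ i, IdentDistrib (Y i) Y₀ volume volume)
    (hInt : ∀ m : ℕ, Integrable fun ω => (Y₀ ω) ^ m)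
    (r : ℕ) (hr : 0 < r) (k : ℕ) :
    ((k.factorial : ℝ))⁻¹ • ((momentSeries Y₀ - 1) ^ k * expSeries r) =
      PowerSeries.mk fun n => probRStirling Y r n k / (n.factorial : ℝ) :=
  probRStirling_generatingFunction_general Y Y₀ hMeas hIndep hId hInt r k
end
end
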